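/- Let k be a positive integer and let D be a weighted digraph on a finite vertex set V such that either every vertex has at most k out-neighbors (vertices u with w(v,u) > 0) or every vertex has at most k in-neighbors (vertices u with w(u,v) > 0). Then mac(D) ≥ (1/4 + 1/(8k+4))·w(D). -/

import Mathlib

open scoped BigOperators Classical

noncomputable section

namespace PaperStmt

variable {V : Type*} [Fintype V]

/-- Total weight of a weighted digraph given by `w : V → V → ℝ`. -/
def totalWeight (w : V → V → ℝ) : ℝ := ∑ u, ∑ v, w u v

/-- Weight of the dicut `(X, Xᶜ)`. -/
def cutWeight (w : V → V → ℝ) (X : Finset V) : ℝ := ∑ x ∈ X, ∑ y ∈ Xᶜ, w x y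

/-- Maximum weight of a directed cut. -/
def mac (w : V → V → ℝ) : ℝ :=
  Finset.univ.sup' ⟨∅, Finset.mem_univ ∅⟩ (fun X : Finset V => cutWeight w X)

/-- `r(v) = w⁺(v) - w⁻(v)`. -/
def rv (w : V → V → ℝ) (v : V) : ℝ := (∑ u, w v u) - (∑ u, w u v)

/-- `r⁺(D) = ∑_{v : r(v) > 0} r(v)`. -/
def rPlus (w : V → V → ℝ) : ℝ :=
  ∑ v ∈ Finset.univ.filter (fun v => 0 < rv w v), rv w v

/-! ### Auxiliary lemmas -/

/-- The key binomial identity: `(k+1) C(2k+1, k+1) = (4k+2) C(2k-1, k)`. -/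
lemma key_identity (k : ℕ) (hk : 0 < k) :
    (k+1) * Nat.choose (2*k+1) (k+1) = (4*k+2) * Nat.choose (2*k-1) k := by
  obtain ⟨j, rfl⟩ : ∃ j, k = j + 1 := ⟨k-1, by omega⟩
  have h5 : 2*(j+1)-1 = 2*j+1 := by omega
  rw [h5]
  have hs := Nat.add_one_mul_choose_eq (2*(j+1)) (j+1)
  have h2 : 2*(j+1) = (2*j+1)+1 := by omega
  have h3 : Nat.choose (2*(j+1)) (j+1) = Nat.choose (2*j+1) j + Nat.choose (2*j+1) (j+1) := by
    rw [h2]; exact Nat.choose_succ_succ (2*j+1) j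
  have h4 : Nat.choose (2*j+1) j = Nat.choose (2*j+1) (j+1) := by
    have h := Nat.choose_symm (show j ≤ 2*j+1 by omega)
    rw [show 2*j+1-j = j+1 by omega] at h
    exact h.symm
  set X := Nat.choose (2*j+1) (j+1) with hX
  have h6 : Nat.choose (2*(j+1)) (j+1) = 2*X := by omega
  rw [h6] at hs
  have h7 : (j+1+1) * Nat.choose (2*(j+1)+1) (j+1+1)
      = Nat.choose (2*(j+1)+1) (j+2) * (j+2) := by ring_nf
  rw [h7, ← hs]; ring

/-- The number of `(k+1)`-subsets of `Fin (2k+1)` containing `a` and avoiding `b`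
is `C(2k-1, k)`. -/
lemma count_subsets (k : ℕ) (a b : Fin (2*k+1)) (hab : a ≠ b) :
    ((Finset.powersetCard (k+1) (Finset.univ : Finset (Fin (2*k+1)))).filter
      (fun S => a ∈ S ∧ b ∉ S)).card = Nat.choose (2*k-1) k := by
  have hT : (((Finset.univ : Finset (Fin (2*k+1))).erase b).erase a).card = 2*k-1 := by
    rw [Finset.card_erase_of_mem (Finset.mem_erase.mpr ⟨hab, Finset.mem_univ a⟩),
        Finset.card_erase_of_mem (Finset.mem_univ b), Finset.card_univ, Fintype.card_fin]
    omega
  rw [← hT, ← Finset.card_powersetCard]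
  refine Finset.card_bij' (fun S _ => S.erase a) (fun R _ => insert a R) ?hi ?hj ?li ?ri
  case hi =>
    intro S hS
    simp only [Finset.mem_filter, Finset.mem_powersetCard] at hS
    obtain ⟨⟨-, hcard⟩, haS, hbS⟩ := hS
    rw [Finset.mem_powersetCard]
    constructor
    · intro x hx
      rw [Finset.mem_erase] at hx
      refine Finset.mem_erase.mpr ⟨hx.1, Finset.mem_erase.mpr ⟨?_, Finset.mem_univ x⟩⟩
      rintro rfl; exact hbS hx.2
    · rw [Finset.card_erase_of_mem haS, hcard]; omega
  case hj =>
    intro R hR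
    rw [Finset.mem_powersetCard] at hR
    obtain ⟨hsub, hcard⟩ := hR
    have haR : a ∉ R := fun h => (Finset.mem_erase.mp (hsub h)).1 rfl
    have hbR : b ∉ R := fun h => (Finset.mem_erase.mp (Finset.mem_erase.mp (hsub h)).2).1 rfl
    simp only [Finset.mem_filter, Finset.mem_powersetCard]
    refine ⟨⟨Finset.subset_univ _, ?_⟩, Finset.mem_insert_self _ _, ?_⟩
    · rw [Finset.card_insert_of_notMem haR, hcard]
    · rw [Finset.mem_insert]
      rintro (rfl | h)
      · exact hab rfl
      · exact hbR h
  case li =>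
    intro S hS
    simp only [Finset.mem_filter] at hS
    exact Finset.insert_erase hS.2.1
  case ri =>
    intro R hR
    rw [Finset.mem_powersetCard] at hR
    have haR : a ∉ R := fun h => (Finset.mem_erase.mp (hR.1 h)).1 rfl
    exact Finset.erase_insert haR

/-- Every digraph whose vertices have at most `k` out-neighbours has an underlying
graph that is `2k`-degenerate, hence properly `(2k+1)`-colourable. -/
lemma exists_proper_coloring (w : V → V → ℝ) (k : ℕ)
    (hdeg : ∀ v : V, (Finset.univ.filter (fun u => 0 < w v u)).card ≤ k) :
    ∀ A : Finset V, ∃ c : V → Fin (2*k+1),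
      ∀ u ∈ A, ∀ x ∈ A, u ≠ x → (0 < w u x ∨ 0 < w x u) → c u ≠ c x := by
  intro A
  induction A using Finset.strongInduction with
  | _ A ih =>
    rcases A.eq_empty_or_nonempty with rfl | hA
    · exact ⟨fun _ => ⟨0, by omega⟩, by simp⟩
    · have hlow : ∃ v ∈ A,
          (A.filter (fun u => u ≠ v ∧ (0 < w v u ∨ 0 < w u v))).card ≤ 2*k := by
        by_contra hcon
        push_neg at hcon
        have hsub : ∀ v : V, (A.filter (fun u => u ≠ v ∧ (0 < w v u ∨ 0 < w u v)))
            ⊆ (A.filter (fun u => 0 < w v u)) ∪ (A.filter (fun u => 0 < w u v)) := by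
          intro v x hx
          simp only [Finset.mem_filter, Finset.mem_union] at hx ⊢
          rcases hx with ⟨hxA, -, h | h⟩
          · exact Or.inl ⟨hxA, h⟩
          · exact Or.inr ⟨hxA, h⟩
        have hdegA : ∀ v : V, (A.filter (fun u => 0 < w v u)).card ≤ k := fun v =>
          le_trans (Finset.card_le_card
            (Finset.filter_subset_filter _ (Finset.subset_univ A))) (hdeg v)
        have hswap : (∑ v ∈ A, (A.filter (fun u => 0 < w u v)).card)
            = ∑ v ∈ A, (A.filter (fun u => 0 < w v u)).card := by
          simp_rw [Finset.card_filter]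
          exact Finset.sum_comm
        have hup : ∑ v ∈ A, (A.filter (fun u => u ≠ v ∧ (0 < w v u ∨ 0 < w u v))).card
            ≤ 2*(k*A.card) := by
          calc ∑ v ∈ A, (A.filter (fun u => u ≠ v ∧ (0 < w v u ∨ 0 < w u v))).card
              ≤ ∑ v ∈ A, ((A.filter (fun u => 0 < w v u)).card
                  + (A.filter (fun u => 0 < w u v)).card) :=
                Finset.sum_le_sum (fun v _ => le_trans (Finset.card_le_card (hsub v))
                  (Finset.card_union_le _ _))
            _ = (∑ v ∈ A, (A.filter (fun u => 0 < w v u)).card)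
                + ∑ v ∈ A, (A.filter (fun u => 0 < w u v)).card := Finset.sum_add_distrib
            _ = 2 * ∑ v ∈ A, (A.filter (fun u => 0 < w v u)).card := by rw [hswap]; ring
            _ ≤ 2*(k*A.card) := by
                have : ∑ v ∈ A, (A.filter (fun u => 0 < w v u)).card ≤ k * A.card := by
                  calc ∑ v ∈ A, (A.filter (fun u => 0 < w v u)).card
                      ≤ ∑ _v ∈ A, k := Finset.sum_le_sum (fun v _ => hdegA v)
                    _ = k * A.card := by rw [Finset.sum_const, smul_eq_mul]; ring
                omega
        have hdown : A.card * (2*k+1)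
            ≤ ∑ v ∈ A, (A.filter (fun u => u ≠ v ∧ (0 < w v u ∨ 0 < w u v))).card := by
          have := Finset.card_nsmul_le_sum A
            (fun v => (A.filter (fun u => u ≠ v ∧ (0 < w v u ∨ 0 < w u v))).card) (2*k+1)
            (fun v hv => hcon v hv)
          simpa [smul_eq_mul] using this
        have hpos : 0 < A.card := Finset.card_pos.mpr hA
        have hexp : A.card * (2*k+1) = 2*(k*A.card) + A.card := by ring
        omega
      obtain ⟨v, hvA, hvdeg⟩ := hlow
      obtain ⟨c', hc'⟩ := ih (A.erase v) (Finset.erase_ssubset hvA)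
      set N := (A.filter (fun u => u ≠ v ∧ (0 < w v u ∨ 0 < w u v))).image c' with hN
      have hNcard : N.card < Fintype.card (Fin (2*k+1)) := by
        rw [Fintype.card_fin]
        exact lt_of_le_of_lt (le_trans Finset.card_image_le hvdeg) (by omega)
      obtain ⟨col, hcol⟩ : ∃ col, col ∉ N := by
        by_contra hcon
        push_neg at hcon
        have hsub : (Finset.univ : Finset (Fin (2*k+1))) ⊆ N := fun x _ => hcon x
        have := Finset.card_le_card hsub
        rw [Finset.card_univ] at this
        omega
      refine ⟨Function.update c' v col, ?_⟩
      intro u hu x hx hne hadj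
      by_cases huv : u = v <;> by_cases hxv : x = v
      · exact absurd (huv.trans hxv.symm) hne
      · subst huv
        rw [Function.update_self, Function.update_of_ne hxv]
        intro heq
        apply hcol
        rw [heq, hN]
        exact Finset.mem_image_of_mem c' (Finset.mem_filter.mpr ⟨hx, hxv, hadj⟩)
      · subst hxv
        rw [Function.update_self, Function.update_of_ne huv]
        intro heq
        apply hcol
        rw [← heq, hN]
        exact Finset.mem_image_of_mem c' (Finset.mem_filter.mpr ⟨hu, huv, hadj.symm⟩)
      · rw [Function.update_of_ne huv, Function.update_of_ne hxv]
        exact hc' u (Finset.mem_erase.mpr ⟨huv, hu⟩) x (Finset.mem_erase.mpr ⟨hxv, hx⟩) hne hadj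

/-- Main construction: a proper `(2k+1)`-colouring plus averaging over all
`(k+1)`-subsets of colours yields a good directed cut. -/
lemma exists_good_cut (w : V → V → ℝ) (hnn : ∀ u v, 0 ≤ w u v) (hdiag : ∀ v, w v v = 0)
    (k : ℕ) (hk : 0 < k)
    (hdeg : ∀ v : V, (Finset.univ.filter (fun u => 0 < w v u)).card ≤ k) :
    ∃ X : Finset V, (1 / 4 + 1 / (8 * (k : ℝ) + 4)) * totalWeight w ≤ cutWeight w X := by
  obtain ⟨c, hc⟩ := exists_proper_coloring w k hdeg Finset.univ
  set 𝒮 := Finset.powersetCard (k+1) (Finset.univ : Finset (Fin (2*k+1))) with h𝒮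
  have h𝒮card : 𝒮.card = Nat.choose (2*k+1) (k+1) := by
    rw [h𝒮, Finset.card_powersetCard, Finset.card_univ, Fintype.card_fin]
  have h𝒮ne : 𝒮.Nonempty := by
    rw [← Finset.card_pos, h𝒮card]
    exact Nat.choose_pos (by omega)
  have hcut : ∀ S : Finset (Fin (2*k+1)),
      cutWeight w (Finset.univ.filter (fun v => c v ∈ S))
        = ∑ u : V, ∑ v : V, (if c u ∈ S ∧ c v ∉ S then w u v else 0) := by
    intro S
    rw [cutWeight, Finset.compl_filter]
    simp only [Finset.sum_filter]
    refine Finset.sum_congr rfl (fun u _ => ?_)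
    by_cases h : c u ∈ S
    · simp [h]
    · simp [h]
  have hsum : ∑ S ∈ 𝒮, cutWeight w (Finset.univ.filter (fun v => c v ∈ S))
      = (Nat.choose (2*k-1) k : ℝ) * totalWeight w := by
    simp_rw [hcut]
    rw [Finset.sum_comm]
    have key : ∀ u : V, ∑ S ∈ 𝒮, ∑ v : V, (if c u ∈ S ∧ c v ∉ S then w u v else 0)
        = ∑ v : V, (Nat.choose (2*k-1) k : ℝ) * w u v := by
      intro u
      rw [Finset.sum_comm]
      refine Finset.sum_congr rfl (fun v _ => ?_)
      rw [← Finset.sum_filter, Finset.sum_const, nsmul_eq_mul]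
      by_cases hw : w u v = 0
      · rw [hw]; ring
      · have hpos : 0 < w u v := lt_of_le_of_ne (hnn u v) (Ne.symm hw)
        have hne : u ≠ v := by
          rintro rfl
          rw [hdiag u] at hpos
          exact lt_irrefl _ hpos
        have hcc : c u ≠ c v := hc u (Finset.mem_univ u) v (Finset.mem_univ v) hne (Or.inl hpos)
        rw [h𝒮, count_subsets k _ _ hcc]
    rw [Finset.sum_congr rfl (fun u _ => key u), totalWeight, Finset.mul_sum]
    exact Finset.sum_congr rfl (fun u _ => (Finset.mul_sum _ _ _).symm)
  obtain ⟨S, hS𝒮, hS⟩ : ∃ S ∈ 𝒮,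
      ((Nat.choose (2*k-1) k : ℝ) * totalWeight w) / 𝒮.card
        ≤ cutWeight w (Finset.univ.filter (fun v => c v ∈ S)) := by
    by_contra hcon
    push_neg at hcon
    have hlt := Finset.sum_lt_sum_of_nonempty h𝒮ne hcon
    rw [hsum, Finset.sum_const, nsmul_eq_mul] at hlt
    have hcard0 : (𝒮.card : ℝ) ≠ 0 := by
      have := Finset.card_pos.mpr h𝒮ne
      positivity
    rw [mul_div_cancel₀ _ hcard0] at hlt
    exact lt_irrefl _ hlt
  refine ⟨Finset.univ.filter (fun v => c v ∈ S), le_trans (le_of_eq ?_) hS⟩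
  have h1 : (0:ℝ) < (Nat.choose (2*k+1) (k+1) : ℝ) := by
    exact_mod_cast Nat.choose_pos (show k+1 ≤ 2*k+1 by omega)
  have hcast : ((k:ℝ)+1) * (Nat.choose (2*k+1) (k+1) : ℝ)
      = (4*(k:ℝ)+2) * (Nat.choose (2*k-1) k : ℝ) := by
    exact_mod_cast key_identity k hk
  have hconst : (1 / 4 + 1 / (8 * (k : ℝ) + 4))
      = (Nat.choose (2*k-1) k : ℝ) / (Nat.choose (2*k+1) (k+1) : ℝ) := by
    have e1 : (1 / 4 + 1 / (8 * (k : ℝ) + 4)) = ((k:ℝ)+1)/(4*(k:ℝ)+2) := by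
      have h8 : (8 * (k : ℝ) + 4) ≠ 0 := by positivity
      field_simp
      ring
    rw [e1, div_eq_div_iff (by positivity) (ne_of_gt h1)]
    linarith [hcast]
  rw [hconst, h𝒮card]
  ring

theorem bounded_semidegree_lower_bound {V : Type*} [Fintype V] [Nonempty V]
    (w : V → V → ℝ) (hnn : ∀ u v, 0 ≤ w u v) (hdiag : ∀ v, w v v = 0)
    (k : ℕ) (hk : 0 < k)
    (hdeg : (∀ v : V, (Finset.univ.filter (fun u => 0 < w v u)).card ≤ k) ∨
            (∀ v : V, (Finset.univ.filter (fun u => 0 < w u v)).card ≤ k)) :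
    (1 / 4 + 1 / (8 * (k : ℝ) + 4)) * totalWeight w ≤ mac w := by
  have hmac : ∀ X : Finset V, cutWeight w X ≤ mac w := fun X =>
    Finset.le_sup' (fun X : Finset V => cutWeight w X) (Finset.mem_univ X)
  rcases hdeg with hout | hin
  · obtain ⟨X, hX⟩ := exists_good_cut w hnn hdiag k hk hout
    exact le_trans hX (hmac X)
  · obtain ⟨X, hX⟩ := exists_good_cut (fun u v => w v u) (fun u v => hnn v u) hdiag k hk hin
    have htw : totalWeight (fun u v => w v u) = totalWeight w := by
      rw [totalWeight, totalWeight]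
      exact Finset.sum_comm
    have hcw : cutWeight (fun u v => w v u) X = cutWeight w Xᶜ := by
      rw [cutWeight, cutWeight, compl_compl]
      exact Finset.sum_comm
    rw [htw, hcw] at hX
    exact le_trans hX (hmac Xᶜ)

end PaperStmt
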